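/- arXiv:2006.01586 — 4 statements merged into one kernel-verified Lean document; each statement's English description precedes it below -/
import Mathlib

section
/- Let 0 < λ < μ and ν > 0, set r = ν/λ and define π_n = (Γ(n+r)/(n!·Γ(r)))·(λ/μ)^n·(1 − λ/μ)^r for n = 0, 1, 2, …. Then these numbers satisfy the stationarity equations of the BDI process: 0 = −ν·π₀ + μ·π₁, and for every n ≥ 1, 0 = ((n−1)·λ + ν)·π_{n−1} − (n·(λ+μ) + ν)·π_n + (n+1)·μ·π_{n+1}. -/
/-!
The numbers `π_n` satisfy detailed balance, `(n + 1) μ π_{n+1} = (n λ + ν) π_n`: by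
`Γ(n + 1 + r) = (n + r) Γ(n + r)` the ratio `π_{n+1} / π_n` is `(n + r) λ / ((n + 1) μ)`, and
`(n + r) λ = n λ + ν` since `r λ = ν`. Each forward equation is the difference of two
consecutive balance relations, so detailed balance implies stationarity.
-/

open Real

/-- The generalized binomial coefficient `C(n + r - 1, n)`. -/
noncomputable def negBinomialCoeff (r : ℝ) (n : ℕ) : ℝ :=
  Gamma (n + r) / (n.factorial * Gamma r)

theorem succ_mul_negBinomialCoeff_succ {r : ℝ} {n : ℕ} (hn : (n : ℝ) + r ≠ 0) :
    ((n : ℝ) + 1) * negBinomialCoeff r (n + 1) = ((n : ℝ) + r) * negBinomialCoeff r n := by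
  have hGamma : Gamma ((n : ℝ) + 1 + r) = ((n : ℝ) + r) * Gamma (n + r) := by
    rw [add_right_comm, Gamma_add_one hn]
  have hn1 : (n : ℝ) + 1 ≠ 0 := by positivity
  simp only [negBinomialCoeff, Nat.factorial_succ, Nat.cast_mul, Nat.cast_succ, hGamma]
  rw [mul_assoc ((n : ℝ) + 1), ← div_div, div_right_comm, mul_div_cancel₀ _ hn1, mul_div_assoc]

section BirthDeath

variable {birth death p : ℕ → ℝ}

theorem birthDeath_forward_eq_zero_of_detailedBalance_zero
    (h : ∀ n, death (n + 1) * p (n + 1) = birth n * p n) :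
    0 = -birth 0 * p 0 + death 1 * p 1 := by
  linear_combination -h 0

theorem birthDeath_forward_eq_zero_of_detailedBalance_succ
    (h : ∀ n, death (n + 1) * p (n + 1) = birth n * p n) (n : ℕ) :
    0 = birth n * p n - (birth (n + 1) + death (n + 1)) * p (n + 1)
      + death (n + 2) * p (n + 2) := by
  linear_combination h n - h (n + 1)

end BirthDeath

/-- With `0 < λ < μ`, `ν > 0`, `r = ν/λ`, the negative binomial numbers
`π_n = (Γ(n+r)/(n!·Γ(r)))·(λ/μ)^n·(1 − λ/μ)^r` satisfy the stationarity equations of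
the BDI process. -/
theorem stmt_5 (lam mu nu r : ℝ) (hlam : 0 < lam) (hlm : lam < mu) (hnu : 0 < nu)
    (hr : r = nu / lam) (pi : ℕ → ℝ)
    (hpi : ∀ n : ℕ, pi n =
      Real.Gamma (n + r) / (n.factorial * Real.Gamma r) * (lam / mu) ^ n *
        (1 - lam / mu) ^ r) :
    0 = -nu * pi 0 + mu * pi 1 ∧
    ∀ n : ℕ, 1 ≤ n →
      0 = (((n : ℝ) - 1) * lam + nu) * pi (n - 1)
          - ((n : ℝ) * (lam + mu) + nu) * pi n
          + ((n : ℝ) + 1) * mu * pi (n + 1) := by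
  have hmu : mu ≠ 0 := (hlam.trans hlm).ne'
  have hrpos : 0 < r := by rw [hr]; positivity
  have hbirth : ∀ n : ℕ, (n : ℝ) * lam + nu = ((n : ℝ) + r) * lam := by
    intro n; rw [hr]; field_simp
  set q := lam / mu
  set K := (1 - q) ^ r
  have hmuq : mu * q = lam := mul_div_cancel₀ lam hmu
  have hpi' : ∀ n, pi n = negBinomialCoeff r n * q ^ n * K := hpi
  have balance : ∀ n : ℕ,
      ((n + 1 : ℕ) : ℝ) * mu * pi (n + 1) = ((n : ℝ) * lam + nu) * pi n := by
    intro n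
    have hcoeff := succ_mul_negBinomialCoeff_succ (r := r) (n := n) (by positivity)
    rw [hpi', hpi', hbirth, Nat.cast_succ, pow_succ]
    linear_combination mu * q * q ^ n * K * hcoeff
      + ((n : ℝ) + r) * negBinomialCoeff r n * q ^ n * K * hmuq
  have first := birthDeath_forward_eq_zero_of_detailedBalance_zero
    (birth := fun n ↦ (n : ℝ) * lam + nu) (death := fun n ↦ (n : ℝ) * mu) balance
  refine ⟨by simpa using first, fun n hn ↦ ?_⟩
  obtain ⟨m, rfl⟩ := Nat.exists_eq_add_of_le' hn
  have interior := birthDeath_forward_eq_zero_of_detailedBalance_succ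
    (birth := fun n ↦ (n : ℝ) * lam + nu) (death := fun n ↦ (n : ℝ) * mu) balance m
  rw [Nat.add_sub_cancel]
  push_cast at interior ⊢
  linear_combination interior
end

section
/- Let μ > 0 and ν > 0, and set r = ν/μ. Define G(z,t) = ( 1 / (1 + μ·t·(1−z)) )^r for z ∈ [0,1] and t ≥ 0. Then G satisfies the partial differential equation ∂G/∂t = (z−1)·[ (μ z − μ)·∂G/∂z + ν·G(z,t) ] for all z ∈ [0,1] and t ≥ 0, with G(z,0) = 1. -/
/-!
With `u = 1 + μt(1−z)` we have `G = u^(-r)`, so each partial derivative of `G` is `-r G / u` times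
the corresponding partial derivative of `u`: `μ(1−z)` in `t` and `−μt` in `z`. After dividing by
`r G / u` and substituting `ν = rμ`, the equation becomes `−μ(1−z) = μ(z−1)(u − μt(1−z))`,
which holds because `u − μt(1−z) = 1`.
-/

theorem HasDerivAt.one_div_rpow_const {f : ℝ → ℝ} {f' x : ℝ} (r : ℝ) (hf : HasDerivAt f f' x)
    (hfx : 0 < f x) :
    HasDerivAt (fun y => (1 / f y) ^ r) (-(r * f') * (1 / f x) ^ r / f x) x := by
  have hinv : HasDerivAt (fun y => 1 / f y) (-f' / f x ^ 2) x := by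
    simpa only [one_div] using hf.fun_inv hfx.ne'
  convert hinv.rpow_const (p := r) (Or.inl (one_div_pos.mpr hfx).ne') using 1
  rw [Real.rpow_sub_one (one_div_pos.mpr hfx).ne']
  field_simp

theorem stmt_12_general (mu nu r : ℝ) (hmu : 0 < mu) (hr : r = nu / mu)
    (G : ℝ → ℝ → ℝ)
    (hG : ∀ z t : ℝ, G z t = (1 / (1 + mu * t * (1 - z))) ^ r) :
    (∀ z ∈ Set.Icc (0:ℝ) 1, ∀ t : ℝ, 0 ≤ t →
      deriv (fun s => G z s) t =
        (z - 1) * ((mu * z - mu) * deriv (fun w => G w t) z + nu * G z t)) ∧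
    (∀ z ∈ Set.Icc (0:ℝ) 1, G z 0 = 1) := by
  obtain rfl : G = fun z t => (1 / (1 + mu * t * (1 - z))) ^ r := funext fun z => funext (hG z)
  clear hG
  refine ⟨fun z hz t ht => ?_, fun z _ => by simp⟩
  have hu : 0 < 1 + mu * t * (1 - z) := by
    linarith [mul_nonneg (mul_nonneg hmu.le ht) (sub_nonneg.2 hz.2)]
  have hdt : HasDerivAt (fun s => 1 + mu * s * (1 - z)) (mu * (1 - z)) t := by
    simpa using (((hasDerivAt_id t).const_mul mu).mul_const (1 - z)).const_add 1
  have hdz : HasDerivAt (fun w => 1 + mu * t * (1 - w)) (-(mu * t)) z := by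
    simpa using (((hasDerivAt_id z).const_sub 1).const_mul (mu * t)).const_add 1
  rw [(hdt.one_div_rpow_const r hu).deriv, (hdz.one_div_rpow_const r hu).deriv, hr]
  beta_reduce
  generalize (1 / (1 + mu * t * (1 - z))) ^ (nu / mu) = P
  generalize hu_def : 1 + mu * t * (1 - z) = u at hu ⊢
  field_simp
  linear_combination nu * P * (z - 1) * hu_def

/-- The critical case `λ = μ`: the PGF `G(z,t) = (1/(1 + μt(1−z)))^r` with `μ > 0`,
`ν > 0`, `r = ν/μ` satisfies `∂G/∂t = (z−1)[(μz−μ)∂G/∂z + νG]` on `[0,1] × [0,∞)`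
with `G(z,0) = 1`. -/
theorem stmt_12 (mu nu r : ℝ) (hmu : 0 < mu) (hnu : 0 < nu) (hr : r = nu / mu)
    (G : ℝ → ℝ → ℝ)
    (hG : ∀ z t : ℝ, G z t = (1 / (1 + mu * t * (1 - z))) ^ r) :
    (∀ z ∈ Set.Icc (0:ℝ) 1, ∀ t : ℝ, 0 ≤ t →
      deriv (fun s => G z s) t =
        (z - 1) * ((mu * z - mu) * deriv (fun w => G w t) z + nu * G z t)) ∧
    (∀ z ∈ Set.Icc (0:ℝ) 1, G z 0 = 1) :=
  stmt_12_general mu nu r hmu hr G hG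
end

section
/- Let 0 < μ < λ and ν > 0, set a = λ − μ, r = ν/λ and β(t) = λ·(e^{a t} − 1)/(λ·e^{a t} − μ). Define the mean m(t) = (ν/a)·(e^{a t} − 1) and the variance σ²(t) = ν·(λ·e^{a t} − μ)·(e^{a t} − 1)/a². Then for every t > 0, the coefficient of variation satisfies √(σ²(t))/m(t) = 1/√(r·β(t)), and moreover √(σ²(t))/m(t) > √(λ/ν). -/
/-! With `x = e^{at} > 1`, both `σ²/m²` and `1/(rβ)` simplify to `(λx − μ)/(ν(x − 1))`, so the
coefficient of variation is `1/√(rβ)`. Since `0 < μ < λ`, `β = λ(x − 1)/(λx − μ)` lies in `(0, 1)`,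
hence `rβ < r = ν/λ` and `1/√(rβ) > 1/√r = √(λ/ν)`. -/

lemma sqrt_div_eq_sqrt_div_sq (s : ℝ) {m : ℝ} (hm : 0 ≤ m) : √s / m = √(s / m ^ 2) := by
  rw [Real.sqrt_div' s (sq_nonneg m), Real.sqrt_sq hm]

lemma one_div_sqrt_lt_one_div_sqrt {x y : ℝ} (hx : 0 < x) (hxy : x < y) :
    1 / √y < 1 / √x :=
  one_div_lt_one_div_of_lt (Real.sqrt_pos.mpr hx) (Real.sqrt_lt_sqrt hx.le hxy)

namespace BDI

variable {lam mu x : ℝ}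

lemma beta_pos (hmu : 0 < mu) (hml : mu < lam) (hx : 1 < x) :
    0 < lam * (x - 1) / (lam * x - mu) := by
  have : 0 < lam := hmu.trans hml
  apply div_pos <;> nlinarith

lemma beta_lt_one (hmu : 0 < mu) (hml : mu < lam) (hx : 1 < x) :
    lam * (x - 1) / (lam * x - mu) < 1 := by
  have : 0 < lam := hmu.trans hml
  rw [div_lt_one (by nlinarith)]
  linarith

lemma variance_div_mean_sq (nu : ℝ) (hlam : lam ≠ 0) (hmu : mu ≠ lam) (hx : x ≠ 1) :
    nu * (lam * x - mu) * (x - 1) / (lam - mu) ^ 2 / ((nu / (lam - mu)) * (x - 1)) ^ 2 =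
      1 / (nu / lam * (lam * (x - 1) / (lam * x - mu))) := by
  have : lam - mu ≠ 0 := sub_ne_zero.mpr hmu.symm
  have : x - 1 ≠ 0 := sub_ne_zero.mpr hx
  by_cases hnu : nu = 0
  · simp [hnu]
  by_cases hden : lam * x - mu = 0
  · simp [hden]
  field_simp

end BDI

/-- The coefficient of variation of the BDI process: with `0 < μ < λ`, `ν > 0`,
`a = λ − μ`, `r = ν/λ`, `β(t) = λ(e^{at}−1)/(λe^{at}−μ)`, mean `m(t) = (ν/a)(e^{at}−1)`
and variance `σ²(t) = ν(λe^{at}−μ)(e^{at}−1)/a²`, for every `t > 0` one has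
`√(σ²(t))/m(t) = 1/√(r·β(t))` and `√(σ²(t))/m(t) > √(λ/ν)`. -/
theorem stmt_15 (lam mu nu a r : ℝ) (hmu : 0 < mu) (hml : mu < lam) (hnu : 0 < nu)
    (ha : a = lam - mu) (hr : r = nu / lam) (beta m sigma2 : ℝ → ℝ)
    (hbeta : ∀ t : ℝ, beta t =
      lam * (Real.exp (a * t) - 1) / (lam * Real.exp (a * t) - mu))
    (hm : ∀ t : ℝ, m t = (nu / a) * (Real.exp (a * t) - 1))
    (hsigma2 : ∀ t : ℝ, sigma2 t =
      nu * (lam * Real.exp (a * t) - mu) * (Real.exp (a * t) - 1) / a ^ 2) :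
    ∀ t : ℝ, 0 < t →
      Real.sqrt (sigma2 t) / m t = 1 / Real.sqrt (r * beta t) ∧
      Real.sqrt (sigma2 t) / m t > Real.sqrt (lam / nu) := by
  intro t ht
  subst ha hr
  have hlam : 0 < lam := hmu.trans hml
  have hexp : 1 < Real.exp ((lam - mu) * t) :=
    Real.one_lt_exp_iff.mpr (mul_pos (sub_pos.mpr hml) ht)
  have hm_nonneg : 0 ≤ m t := by
    rw [hm]
    exact mul_nonneg (div_nonneg hnu.le (by linarith)) (by linarith)
  have hrbeta_pos : 0 < nu / lam * beta t := by
    rw [hbeta]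
    exact mul_pos (div_pos hnu hlam) (BDI.beta_pos hmu hml hexp)
  have hrbeta_lt : nu / lam * beta t < nu / lam := by
    rw [hbeta]
    exact mul_lt_of_lt_one_right (by positivity) (BDI.beta_lt_one hmu hml hexp)
  have hcv : Real.sqrt (sigma2 t) / m t = 1 / Real.sqrt (nu / lam * beta t) := by
    rw [sqrt_div_eq_sqrt_div_sq _ hm_nonneg, hsigma2, hm,
      BDI.variance_div_mean_sq nu hlam.ne' hml.ne hexp.ne', ← hbeta t,
      Real.sqrt_div' 1 hrbeta_pos.le, Real.sqrt_one]
  refine ⟨hcv, ?_⟩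
  calc Real.sqrt (lam / nu) = 1 / Real.sqrt (nu / lam) := by
        rw [one_div, ← Real.sqrt_inv, inv_div]
    _ < 1 / Real.sqrt (nu / lam * beta t) := one_div_sqrt_lt_one_div_sqrt hrbeta_pos hrbeta_lt
    _ = Real.sqrt (sigma2 t) / m t := hcv.symm
end

section
/- Let 0 < μ < λ and ν > 0, set a = λ − μ, r = ν/λ and β(t) = λ·(e^{a t} − 1)/(λ·e^{a t} − μ). Then β(t) → 1 as t → ∞, and consequently the coefficient of variation c(t) = 1/√(r·β(t)) of the BDI process converges to √(1/r) = √(λ/ν) as t → ∞. -/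
/-- Proposition 1 of the paper: with `0 < μ < λ`, `ν > 0`, `a = λ − μ`, `r = ν/λ`,
`β(t) = λ(e^{at}−1)/(λe^{at}−μ)`, one has `β(t) → 1` as `t → ∞`, and the coefficient
of variation `c(t) = 1/√(r·β(t))` converges to `√(1/r) = √(λ/ν)`. -/
theorem stmt_16 (lam mu nu a r : ℝ) (hmu : 0 < mu) (hml : mu < lam) (hnu : 0 < nu)
    (ha : a = lam - mu) (hr : r = nu / lam) (beta : ℝ → ℝ)
    (hbeta : ∀ t : ℝ, beta t =
      lam * (Real.exp (a * t) - 1) / (lam * Real.exp (a * t) - mu)) :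
    Filter.Tendsto beta Filter.atTop (nhds 1) ∧
    Filter.Tendsto (fun t => 1 / Real.sqrt (r * beta t)) Filter.atTop
      (nhds (Real.sqrt (1 / r))) ∧
    Real.sqrt (1 / r) = Real.sqrt (lam / nu) := by
  have hlam : 0 < lam := hmu.trans hml
  have hapos : 0 < a := by rw [ha]; linarith
  have hrpos : 0 < r := by rw [hr]; positivity
  -- e^{-(a t)} → 0
  have hexp : Filter.Tendsto (fun t : ℝ => Real.exp (-(a * t))) Filter.atTop (nhds 0) := by
    apply Real.tendsto_exp_atBot.comp
    apply Filter.tendsto_neg_atBot_iff.mpr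
    exact Filter.Tendsto.const_mul_atTop hapos Filter.tendsto_id
  -- rewrite beta
  have hbeta2 : ∀ t : ℝ, beta t =
      (lam - lam * Real.exp (-(a * t))) / (lam - mu * Real.exp (-(a * t))) := by
    intro t
    rw [hbeta t]
    have he : Real.exp (a * t) ≠ 0 := Real.exp_ne_zero _
    rw [Real.exp_neg]
    rcases eq_or_ne (lam * Real.exp (a * t) - mu) 0 with h | h
    · have h2 : lam - mu * (Real.exp (a * t))⁻¹ = 0 := by
        field_simp
        linarith [h]
      rw [h, h2, div_zero, div_zero]
    · have h2 : lam - mu * (Real.exp (a * t))⁻¹ ≠ 0 := by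
        intro h2
        apply h
        field_simp at h2
        linarith
      field_simp
  have h1 : Filter.Tendsto beta Filter.atTop (nhds 1) := by
    have hnum : Filter.Tendsto (fun t : ℝ => lam - lam * Real.exp (-(a * t)))
        Filter.atTop (nhds lam) := by
      have := (hexp.const_mul lam).const_sub lam
      simpa using this
    have hden : Filter.Tendsto (fun t : ℝ => lam - mu * Real.exp (-(a * t)))
        Filter.atTop (nhds lam) := by
      have := (hexp.const_mul mu).const_sub lam
      simpa using this
    have := hnum.div hden hlam.ne'
    rw [div_self hlam.ne'] at this
    exact this.congr fun t => (hbeta2 t).symm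
  refine ⟨h1, ?_, ?_⟩
  · have h2 : Filter.Tendsto (fun t => 1 / Real.sqrt (r * beta t)) Filter.atTop
        (nhds (1 / Real.sqrt (r * 1))) := by
      apply Filter.Tendsto.div tendsto_const_nhds
      · exact ((h1.const_mul r).sqrt)
      · rw [mul_one]
        exact (Real.sqrt_ne_zero'.mpr hrpos)
    rw [mul_one] at h2
    have : Real.sqrt (1 / r) = 1 / Real.sqrt r := by
      rw [one_div, one_div, Real.sqrt_inv]
    rw [this]
    exact h2
  · rw [hr]
    congr 1
    field_simp
end
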